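/- Let n ≥ 1, u ∈ ℝ^n with u_i > 0 for all i and ∑_{i=1}^n u_i < 1, and set u_0 = 1 − ∑_{i=1}^n u_i. Let q_{ij} ≥ r_{ij} ≥ 0 and define q_i(u), r_i(u), A(u) as in the multiphase model (A(u)_{ij} = (q_i(u) − r_i(u)) δ_{ij} + u_i (q_{ij} − q_j(u) + r_{ij} + r_j(u) − ∑_ℓ u_ℓ (q_{ℓj}+r_{ℓj})) with q_i(u)=∑_j q_{ij}u_j, r_i(u)=∑_j r_{ij}u_j). Let H(u)_{ij} = δ_{ij}/u_i + 1/u_0. Then the matrix product satisfies (H(u)A(u))_{ij} = (δ_{ij}/u_i)(q_i(u) − r_i(u)) + q_{ij} + r_{ij} for all i, j = 1,…,n. -/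

import Mathlib

open Finset

/-- Solvent volume fraction `u₀ = 1 - ∑ uᵢ`. -/
noncomputable def solvent (n : ℕ) (u : Fin n → ℝ) : ℝ := 1 - ∑ i, u i

/-- Linear pressure `qᵢ(u) = ∑ⱼ q_{ij} uⱼ`. -/
noncomputable def press (n : ℕ) (q : Fin n → Fin n → ℝ) (u : Fin n → ℝ) (i : Fin n) : ℝ :=
  ∑ j, q i j * u j

/-- Hessian of the Boltzmann entropy: `H(u)_{ij} = δ_{ij}/uᵢ + 1/u₀`. -/
noncomputable def hessB (n : ℕ) (u : Fin n → ℝ) (i j : Fin n) : ℝ :=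
  (if i = j then 1 / u i else 0) + 1 / solvent n u

/-- Diffusion matrix of the multiphase cross-diffusion system. -/
noncomputable def diffA (n : ℕ) (q r : Fin n → Fin n → ℝ) (u : Fin n → ℝ) (i j : Fin n) : ℝ :=
  (press n q u i - press n r u i) * (if i = j then 1 else 0) +
    u i * (q i j - press n q u j + r i j + press n r u j -
      ∑ l, u l * (q l j + r l j))

/-! The column sums of `A(u)` are `u₀ (qⱼ(u) - rⱼ(u) + ∑ₗ uₗ (q_{lj} + r_{lj}))`, so the rank-one
part `1/u₀` of `H(u)` contributes exactly the term that `A_{ij}/uᵢ` subtracts from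
`q_{ij} + r_{ij}`, and the two cancel. -/

theorem sum_diffA_eq_solvent_mul (n : ℕ) (q r : Fin n → Fin n → ℝ) (u : Fin n → ℝ) (j : Fin n) :
    ∑ k, diffA n q r u k j =
      solvent n u * (press n q u j - press n r u j + ∑ l, u l * (q l j + r l j)) := by
  simp only [diffA, solvent, sum_add_distrib, mul_ite, mul_one, mul_zero, sum_ite_eq',
    mem_univ, if_true, mul_sub, mul_add, sum_sub_distrib, ← sum_mul]
  ring

theorem sum_hessB_mul (n : ℕ) (u v : Fin n → ℝ) (i : Fin n) :
    ∑ k, hessB n u i k * v k = v i / u i + (∑ k, v k) / solvent n u := by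
  simp only [hessB, add_mul, sum_add_distrib, ite_mul, zero_mul, sum_ite_eq, mem_univ,
    if_true, ← mul_sum]
  ring

theorem diffA_div_self (n : ℕ) (q r : Fin n → Fin n → ℝ) (u : Fin n → ℝ) {i : Fin n}
    (hui : u i ≠ 0) (j : Fin n) :
    diffA n q r u i j / u i =
      (if i = j then (press n q u i - press n r u i) / u i else 0) + q i j + r i j -
        (press n q u j - press n r u j + ∑ l, u l * (q l j + r l j)) := by
  rw [diffA, add_div, mul_div_cancel_left₀ _ hui]
  split_ifs <;> ring

theorem stmt_1_general (n : ℕ) (q r : Fin n → Fin n → ℝ)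
    (u : Fin n → ℝ) (hu : ∀ i, 0 < u i) (hsum : ∑ i, u i < 1) :
    ∀ i j : Fin n,
      (∑ k, hessB n u i k * diffA n q r u k j) =
        (if i = j then (press n q u i - press n r u i) / u i else 0) + q i j + r i j := by
  intro i j
  have hsolvent : solvent n u ≠ 0 := by
    rw [solvent]
    linarith
  rw [sum_hessB_mul, sum_diffA_eq_solvent_mul, mul_div_cancel_left₀ _ hsolvent,
    diffA_div_self n q r u (hu i).ne']
  ring

theorem stmt_1 (n : ℕ) (hn : 1 ≤ n) (q r : Fin n → Fin n → ℝ)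
    (hr : ∀ i j, 0 ≤ r i j) (hqr : ∀ i j, r i j ≤ q i j)
    (u : Fin n → ℝ) (hu : ∀ i, 0 < u i) (hsum : ∑ i, u i < 1) :
    ∀ i j : Fin n,
      (∑ k, hessB n u i k * diffA n q r u k j) =
        (if i = j then (press n q u i - press n r u i) / u i else 0) + q i j + r i j :=
  stmt_1_general n q r u hu hsum
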